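/- Let {A_ξ : ξ < κ} be an almost disjoint family of infinite subsets of ℕ. Then the map sending the unit vector 1_{{ξ}} of c₀(κ) to the element [1_{A_ξ}] of ℓ∞/c₀ extends (uniquely, by linearity and density) to a linear isometric embedding T : c₀(κ) → ℓ∞/c₀; in particular, the closed linear span of {[1_{A_ξ}] : ξ < κ} in ℓ∞/c₀ is isometric to c₀(κ). -/

import Mathlib

set_option synthInstance.maxHeartbeats 400000
set_option maxHeartbeats 1000000

noncomputable section

open Set Filter
open scoped ENNReal

/-- The Banach space `ℓ∞` of bounded real sequences with the sup norm. -/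
abbrev Linf : Type := ↥(lp (fun _ : ℕ => ℝ) ∞)

/-- For `y ∈ ℓ∞` and `A ⊆ ℕ`, the truncation `y_A`, equal to `y` on `A` and `0` elsewhere. -/
def truncSeq (A : Set ℕ) (y : Linf) : Linf :=
  ⟨fun i => A.indicator (⇑y) i, memℓp_infty ⟨‖y‖, by
    rintro x ⟨i, rfl⟩
    by_cases h : i ∈ A
    · simpa [Set.indicator_of_mem h] using lp.norm_apply_le_norm ENNReal.top_ne_zero y i
    · simp [Set.indicator_of_notMem h]⟩⟩

/-- The closed subspace `c₀ ⊆ ℓ∞` of sequences converging to `0`. -/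
def c0 : Submodule ℝ Linf where
  carrier := {f | Tendsto (fun n => f n) atTop (nhds 0)}
  add_mem' := by
    intro f g hf hg
    have := hf.add hg
    simpa [lp.coeFn_add] using this
  zero_mem' := by
    simpa [lp.coeFn_zero] using
      (tendsto_const_nhds : Tendsto (fun _ : ℕ => (0 : ℝ)) atTop (nhds 0))
  smul_mem' := by
    intro c f hf
    have := hf.const_smul c
    simpa [lp.coeFn_smul] using this

/-- The quotient map `π : ℓ∞ → ℓ∞/c₀`. -/
def quotMap : Linf →ₗ[ℝ] Linf ⧸ c0 := c0.mkQ

/-- `c₀(κ)`: the space of real functions on `κ` vanishing at infinity, with sup norm,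
realized as a subspace of `ℓ∞(κ)`. -/
def c0K (κ : Type*) : Submodule ℝ ↥(lp (fun _ : κ => ℝ) ∞) where
  carrier := {f | Tendsto (fun i => f i) Filter.cofinite (nhds 0)}
  add_mem' := by
    intro f g hf hg
    have := hf.add hg
    simpa [lp.coeFn_add] using this
  zero_mem' := by
    simpa [lp.coeFn_zero] using
      (tendsto_const_nhds : Tendsto (fun _ : _ => (0 : ℝ)) Filter.cofinite (nhds 0))
  smul_mem' := by
    intro c f hf
    have := hf.const_smul c
    simpa [lp.coeFn_smul] using this

/-- The unit vector `1_{{ξ}}` of `c₀(κ)`. -/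
def unitVec0 {κ : Type*} (ξ : κ) : ↥(c0K κ) :=
  ⟨⟨({ξ} : Set κ).indicator (fun _ => (1 : ℝ)), memℓp_infty ⟨1, by
      rintro x ⟨i, rfl⟩
      by_cases h : i ∈ ({ξ} : Set κ)
      · simp [Set.indicator_of_mem h]
      · simp [Set.indicator_of_notMem h]⟩⟩, by
    have hev : ∀ᶠ i in Filter.cofinite,
        (({ξ} : Set κ).indicator (fun _ => (1 : ℝ))) i = 0 := by
      apply Set.Finite.eventually_cofinite_notMem (Set.finite_singleton ξ) |>.mono
      intro i hi
      exact Set.indicator_of_notMem hi _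
    show Tendsto _ Filter.cofinite (nhds 0)
    exact Filter.Tendsto.congr' (hev.mono fun i hi => hi.symm) tendsto_const_nhds⟩

/-- The indicator `1_A ∈ ℓ∞` of `A ⊆ ℕ`. -/
def indLinf (A : Set ℕ) : Linf :=
  ⟨A.indicator (fun _ => (1 : ℝ)), memℓp_infty ⟨1, by
    rintro x ⟨i, rfl⟩
    by_cases h : i ∈ A
    · simp [Set.indicator_of_mem h]
    · simp [Set.indicator_of_notMem h]⟩⟩

/-! The quotient norm of `[x]` in `ℓ∞/c₀` is `limsup ‖x n‖`. For finitely supported `f`, outside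
the finite union of the intersections `A ξ ∩ A η` (`ξ ≠ η` in the support of `f`) the sequence
`∑ f ξ • 1_{A ξ}` takes only the values `f ξ`, each on an infinite set, and `0`; hence its class
has norm `max |f ξ| = ‖f‖`. So `f ↦ [∑ f ξ • 1_{A ξ}]` is isometric on the dense subspace of
finitely supported vectors of `c₀(κ)`, and extends to `c₀(κ)` since `ℓ∞/c₀` is complete. -/

theorem LinearMap.exists_linearIsometry_extend {𝕜 E Eₗ F : Type*} [NormedField 𝕜]
    [AddCommGroup E] [Module 𝕜 E] [SeminormedAddCommGroup Eₗ] [NormedSpace 𝕜 Eₗ]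
    [NormedAddCommGroup F] [NormedSpace 𝕜 F] [CompleteSpace F]
    (f : E →ₗ[𝕜] F) (e : E →ₗ[𝕜] Eₗ) (h_dense : DenseRange e) (h_norm : ∀ x, ‖f x‖ = ‖e x‖) :
    ∃ T : Eₗ →ₗᵢ[𝕜] F, ∀ x, T (e x) = f x := by
  have h_bound : ∃ C, ∀ x, ‖f x‖ ≤ C * ‖e x‖ := ⟨1, fun x => by rw [h_norm, one_mul]⟩
  refine ⟨⟨(f.extendOfNorm e).toLinearMap, fun y => ?_⟩, extendOfNorm_eq h_dense h_bound⟩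
  refine h_dense.induction_on y ?_ fun x => ?_
  · exact isClosed_eq (f.extendOfNorm e).continuous.norm continuous_norm
  · simp only [ContinuousLinearMap.coe_coe, extendOfNorm_eq h_dense h_bound, h_norm]

instance isClosed_c0 : IsClosed (c0 : Set Linf) := by
  refine isClosed_of_closure_subset fun x hx => Metric.tendsto_atTop.2 fun ε hε => ?_
  obtain ⟨g, hg, hxg⟩ := Metric.mem_closure_iff.1 hx (ε / 2) (half_pos hε)
  obtain ⟨N, hN⟩ := Metric.tendsto_atTop.1 (show Tendsto (fun n => g n) atTop (nhds 0) from hg)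
    (ε / 2) (half_pos hε)
  refine ⟨N, fun n hn => ?_⟩
  have hxgn : dist (x n) (g n) < ε / 2 := by
    rw [dist_eq_norm, ← Pi.sub_apply, ← lp.coeFn_sub]
    exact (lp.norm_apply_le_norm ENNReal.top_ne_zero _ n).trans_lt (dist_eq_norm x g ▸ hxg)
  linarith [dist_triangle (x n) (g n) 0, hN n hn]

lemma truncSeq_mem_c0 {N : Set ℕ} (hN : N.Finite) (y : Linf) : truncSeq N y ∈ c0 := by
  show Tendsto (fun n => N.indicator (⇑y) n) atTop (nhds 0)
  rw [← Nat.cofinite_eq_atTop]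
  exact tendsto_const_nhds.congr' <|
    hN.eventually_cofinite_notMem.mono fun n hn => (Set.indicator_of_notMem hn _).symm

lemma norm_mk_le_of_eventually_le {x : Linf} {C : ℝ} (hC : 0 ≤ C)
    (h : ∀ᶠ n in atTop, ‖x n‖ ≤ C) : ‖(Submodule.Quotient.mk x : Linf ⧸ c0)‖ ≤ C := by
  set N := {n | ¬ ‖x n‖ ≤ C}
  have hN : N.Finite := by rwa [← Nat.cofinite_eq_atTop, eventually_cofinite] at h
  have hmk : (Submodule.Quotient.mk x : Linf ⧸ c0) = Submodule.Quotient.mk (x - truncSeq N x) := by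
    rw [Submodule.Quotient.mk_sub, (Submodule.Quotient.mk_eq_zero c0).2 (truncSeq_mem_c0 hN x),
      sub_zero]
  refine hmk ▸ (Submodule.Quotient.norm_mk_le c0 _).trans (lp.norm_le_of_forall_le hC fun n => ?_)
  rw [lp.coeFn_sub, Pi.sub_apply]
  change ‖x n - N.indicator x n‖ ≤ C
  by_cases hn : n ∈ N
  · rwa [Set.indicator_of_mem hn, sub_self, norm_zero]
  · rw [Set.indicator_of_notMem hn, sub_zero]
    exact not_not.1 hn

lemma le_norm_mk_of_frequently_le {x : Linf} {a : ℝ} (h : ∃ᶠ n in atTop, a ≤ ‖x n‖) :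
    a ≤ ‖(Submodule.Quotient.mk x : Linf ⧸ c0)‖ := by
  refine QuotientAddGroup.le_norm_iff.2 fun m hm => le_of_forall_pos_lt_add fun ε hε => ?_
  have hm' : Submodule.Quotient.mk x = Submodule.Quotient.mk m := hm.symm
  have hxm : Tendsto (fun n => (x - m) n) atTop (nhds 0) := (Submodule.Quotient.eq c0).1 hm'
  obtain ⟨n, han, hsmall⟩ :=
    (h.and_eventually (Metric.tendsto_nhds.1 hxm ε hε)).exists
  rw [dist_zero_right, lp.coeFn_sub, Pi.sub_apply] at hsmall
  calc a ≤ ‖x n‖ := han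
    _ ≤ ‖x n - m n‖ + ‖m n‖ := norm_le_norm_sub_add _ _
    _ < ε + ‖m‖ := add_lt_add_of_lt_of_le hsmall (lp.norm_apply_le_norm ENNReal.top_ne_zero m n)
    _ = ‖m‖ + ε := add_comm _ _

lemma lp_linearCombination_apply {ι α : Type*} (v : ι → lp (fun _ : α => ℝ) ∞) (f : ι →₀ ℝ)
    (a : α) : Finsupp.linearCombination ℝ v f a = ∑ ξ ∈ f.support, f ξ * v ξ a := by
  rw [Finsupp.linearCombination_apply, Finsupp.sum, lp.coeFn_sum, Finset.sum_apply]
  rfl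

lemma linearCombination_unitVec0_apply {κ : Type*} (f : κ →₀ ℝ) (i : κ) :
    ((Finsupp.linearCombination ℝ unitVec0 f : c0K κ) : lp (fun _ : κ => ℝ) ∞) i = f i := by
  rw [← Submodule.subtype_apply, Finsupp.apply_linearCombination, lp_linearCombination_apply,
    Finset.sum_eq_single i]
  · simp [unitVec0]
  · intro ξ _ hξi
    simp [unitVec0, Ne.symm hξi]
  · simp +contextual

lemma denseRange_linearCombination_unitVec0 {κ : Type*} :
    DenseRange (Finsupp.linearCombination ℝ (unitVec0 (κ := κ))) := by
  refine Metric.denseRange_iff.2 fun x ε hε => ?_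
  set F := {i | ε / 2 ≤ ‖(x : lp (fun _ : κ => ℝ) ∞) i‖}
  have hF : F.Finite := by
    simpa [F, not_lt] using eventually_cofinite.1 (Metric.tendsto_nhds.1 x.2 _ (half_pos hε))
  let g : κ →₀ ℝ := Finsupp.onFinset hF.toFinset (F.indicator (x : lp (fun _ : κ => ℝ) ∞))
    fun i hi => hF.mem_toFinset.2 (Set.mem_of_indicator_ne_zero hi)
  refine ⟨g, lt_of_le_of_lt ?_ (half_lt_self hε)⟩
  rw [dist_eq_norm, Submodule.coe_norm, Submodule.coe_sub]
  refine lp.norm_le_of_forall_le (half_pos hε).le fun i => ?_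
  rw [lp.coeFn_sub, Pi.sub_apply, linearCombination_unitVec0_apply,
    Finsupp.onFinset_apply, ← Pi.sub_apply, ← Set.indicator_compl]
  by_cases hi : i ∈ F
  · rw [Set.indicator_of_notMem (Set.notMem_compl_iff.2 hi), norm_zero]
    exact (half_pos hε).le
  · rw [Set.indicator_of_mem hi]
    exact (not_le.1 hi).le

section AlmostDisjoint

variable {κ : Type*} (A : κ → Set ℕ)

lemma linearCombination_indLinf_apply_of_mem {f : κ →₀ ℝ} {n : ℕ}
    (hn : ∀ ξ ∈ f.support, ∀ η ∈ f.support, η ≠ ξ → n ∉ A ξ ∩ A η) {ξ : κ}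
    (hξ : ξ ∈ f.support) (hnξ : n ∈ A ξ) :
    Finsupp.linearCombination ℝ (fun η => indLinf (A η)) f n = f ξ := by
  rw [lp_linearCombination_apply, Finset.sum_eq_single ξ]
  · simp [indLinf, hnξ]
  · intro η hη hηξ
    have hnη : n ∉ A η := fun hnη => hn ξ hξ η hη hηξ ⟨hnξ, hnη⟩
    simp [indLinf, hnη]
  · exact fun h => absurd hξ h

lemma linearCombination_indLinf_apply_of_forall_notMem {f : κ →₀ ℝ} {n : ℕ}
    (h : ∀ η ∈ f.support, n ∉ A η) :
    Finsupp.linearCombination ℝ (fun η => indLinf (A η)) f n = 0 := by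
  rw [lp_linearCombination_apply]
  exact Finset.sum_eq_zero fun η hη => by simp [indLinf, h η hη]

lemma eventually_notMem_inter (hAD : Pairwise fun ξ η => (A ξ ∩ A η).Finite) (s : Finset κ) :
    ∀ᶠ n in atTop, ∀ ξ ∈ s, ∀ η ∈ s, η ≠ ξ → n ∉ A ξ ∩ A η := by
  rw [← Nat.cofinite_eq_atTop]
  refine (eventually_all_finset s).2 fun ξ _ => (eventually_all_finset s).2 fun η _ => ?_
  by_cases hηξ : η = ξ
  · exact Eventually.of_forall fun _ h => absurd hηξ h
  · exact (hAD (Ne.symm hηξ)).eventually_cofinite_notMem.mono fun _ hn _ => hn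

theorem norm_mk_linearCombination_indLinf (hAinf : ∀ ξ, (A ξ).Infinite)
    (hAD : Pairwise fun ξ η => (A ξ ∩ A η).Finite) (f : κ →₀ ℝ) :
    ‖(Submodule.Quotient.mk (Finsupp.linearCombination ℝ (fun ξ => indLinf (A ξ)) f) :
      Linf ⧸ c0)‖ = ‖Finsupp.linearCombination ℝ unitVec0 f‖ := by
  have hcoord (ξ : κ) : ‖f ξ‖ ≤ ‖Finsupp.linearCombination ℝ unitVec0 f‖ :=
    linearCombination_unitVec0_apply f ξ ▸ lp.norm_apply_le_norm ENNReal.top_ne_zero _ ξ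
  apply le_antisymm
  · refine norm_mk_le_of_eventually_le (norm_nonneg _)
      ((eventually_notMem_inter A hAD f.support).mono fun n hn => ?_)
    by_cases hex : ∃ ξ ∈ f.support, n ∈ A ξ
    · obtain ⟨ξ, hξ, hnξ⟩ := hex
      rw [linearCombination_indLinf_apply_of_mem A hn hξ hnξ]
      exact hcoord ξ
    · push Not at hex
      rw [linearCombination_indLinf_apply_of_forall_notMem A hex, norm_zero]
      exact norm_nonneg _
  · rw [Submodule.coe_norm]
    refine lp.norm_le_of_forall_le (norm_nonneg _) fun ξ => ?_
    rw [linearCombination_unitVec0_apply]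
    by_cases hξ : ξ ∈ f.support
    · refine le_norm_mk_of_frequently_le <|
        ((Nat.frequently_atTop_iff_infinite.2 (hAinf ξ)).and_eventually
          (eventually_notMem_inter A hAD f.support)).mono fun n ⟨hnξ, hn⟩ => ?_
      rw [linearCombination_indLinf_apply_of_mem A hn hξ hnξ]
    · rw [Finsupp.notMem_support_iff.1 hξ, norm_zero]
      exact norm_nonneg _

end AlmostDisjoint

theorem stmt19_general {κ : Type*} (A : κ → Set ℕ)
    (hAinf : ∀ ξ, (A ξ).Infinite)
    (hAD : ∀ ξ η, ξ ≠ η → (A ξ ∩ A η).Finite) :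
    ∃ T : ↥(c0K κ) →ₗᵢ[ℝ] (Linf ⧸ c0),
      ∀ ξ : κ, T (unitVec0 ξ) = Submodule.Quotient.mk (indLinf (A ξ)) := by
  obtain ⟨T, hT⟩ := LinearMap.exists_linearIsometry_extend
    (c0.mkQ ∘ₗ Finsupp.linearCombination ℝ fun ξ => indLinf (A ξ))
    (Finsupp.linearCombination ℝ unitVec0) denseRange_linearCombination_unitVec0
    (norm_mk_linearCombination_indLinf A hAinf fun ξ η => hAD ξ η)
  exact ⟨T, fun ξ => by simpa using hT (Finsupp.single ξ 1)⟩

/-- for an almost disjoint family `{A_ξ : ξ < κ}`, the assignment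
`1_{{ξ}} ↦ [1_{A_ξ}]` extends to a linear isometric embedding `T : c₀(κ) → ℓ∞/c₀`. -/
theorem stmt19 {κ : Type*} (A : κ → Set ℕ) (hinj : Function.Injective A)
    (hAinf : ∀ ξ, (A ξ).Infinite)
    (hAD : ∀ ξ η, ξ ≠ η → (A ξ ∩ A η).Finite) :
    ∃ T : ↥(c0K κ) →ₗᵢ[ℝ] (Linf ⧸ c0),
      ∀ ξ : κ, T (unitVec0 ξ) = Submodule.Quotient.mk (indLinf (A ξ)) :=
  stmt19_general A hAinf hAD
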